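/- With θ = 2bτ and Φ(τ,y,a,b) = (4πτ)^{-1/2}√(θ/sinh θ)·exp{-(1/(4τ))[(θ cosh θ/sinh θ)y² + 4aτ((cosh θ - 1)/sinh θ)y + 8a²τ²((cosh θ - 1)/(θ sinh θ))]}, the function Φ satisfies ∂Φ/∂τ - ∂²Φ/∂y² + (a + by)²·Φ = 0 for all τ > 0, y ∈ ℝ. -/

import Mathlib

/-!
For `τ > 0`, `Φ(τ, ·)` is a Gaussian `A exp (-(P y² + Q y + R))` with
`P = (b/2) coth 2bτ`, `Q = a tanh bτ`, `R = (a²/b) tanh bτ`, `A = √(b/2π) (sinh 2bτ)^(-1/2)`.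
Substituting such an ansatz into `∂_τ u - ∂_y² u + (a + b y)² u` and comparing the coefficients
of `y²`, `y`, `1` shows that it is a solution as soon as
`P' = b² - 4P²`, `Q' = 2ab - 4PQ`, `R' = a² - Q²` and `A' = -2PA`.
These hold for the coefficients above by `cosh² - sinh² = 1`, via `tanh' = b (1 - tanh²)` and
`4 coth(2bτ) tanh(bτ) = 2 (1 + tanh² bτ)`.
-/

open Real Filter Topology

noncomputable section

def gaussian (A P Q R : ℝ → ℝ) (τ y : ℝ) : ℝ :=
  A τ * exp (-(P τ * y ^ 2 + Q τ * y + R τ))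

section Gaussian

variable (A P Q R : ℝ → ℝ) (τ : ℝ)

theorem hasDerivAt_gaussian_space (y : ℝ) :
    HasDerivAt (gaussian A P Q R τ) (-(2 * P τ * y + Q τ) * gaussian A P Q R τ y) y := by
  have hexponent : HasDerivAt (fun w => -(P τ * w ^ 2 + Q τ * w + R τ))
      (-(2 * P τ * y + Q τ)) y :=
    (((((hasDerivAt_pow 2 y).const_mul (P τ)).fun_add
      ((hasDerivAt_id' y).const_mul (Q τ))).add_const (R τ)).fun_neg).congr_deriv (by ring)
  exact (hexponent.exp.const_mul (A τ)).congr_deriv (by simp only [gaussian]; ring)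

theorem deriv_deriv_gaussian_space (y : ℝ) :
    deriv (deriv (gaussian A P Q R τ)) y =
      ((2 * P τ * y + Q τ) ^ 2 - 2 * P τ) * gaussian A P Q R τ y := by
  have hfirst :
      deriv (gaussian A P Q R τ) = fun z => -(2 * P τ * z + Q τ) * gaussian A P Q R τ z :=
    funext fun z => (hasDerivAt_gaussian_space A P Q R τ z).deriv
  have hlinear : HasDerivAt (fun z => -(2 * P τ * z + Q τ)) (-(2 * P τ)) y :=
    (((hasDerivAt_id' y).const_mul (2 * P τ)).add_const (Q τ)).fun_neg.congr_deriv (by ring)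
  rw [hfirst, (hlinear.fun_mul (hasDerivAt_gaussian_space A P Q R τ y)).deriv]
  ring

variable {A P Q R τ}

theorem hasDerivAt_gaussian_time {A' P' Q' R' : ℝ} (hA : HasDerivAt A A' τ)
    (hP : HasDerivAt P P' τ) (hQ : HasDerivAt Q Q' τ) (hR : HasDerivAt R R' τ) (y : ℝ) :
    HasDerivAt (fun s => gaussian A P Q R s y)
      (A' * exp (-(P τ * y ^ 2 + Q τ * y + R τ))
        - (P' * y ^ 2 + Q' * y + R') * gaussian A P Q R τ y) τ :=
  (hA.fun_mul (((hP.mul_const (y ^ 2)).fun_add (hQ.mul_const y)).fun_add hR).fun_neg.exp)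
    |>.congr_deriv (by simp only [gaussian]; ring)

theorem gaussian_heat_equation (a b : ℝ) (hA : HasDerivAt A (-2 * P τ * A τ) τ)
    (hP : HasDerivAt P (b ^ 2 - 4 * P τ ^ 2) τ)
    (hQ : HasDerivAt Q (2 * a * b - 4 * P τ * Q τ) τ)
    (hR : HasDerivAt R (a ^ 2 - Q τ ^ 2) τ) (y : ℝ) :
    deriv (fun s => gaussian A P Q R s y) τ - deriv (deriv (gaussian A P Q R τ)) y
      + (a + b * y) ^ 2 * gaussian A P Q R τ y = 0 := by
  rw [(hasDerivAt_gaussian_time hA hP hQ hR y).deriv, deriv_deriv_gaussian_space]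
  simp only [gaussian]
  ring

end Gaussian

theorem hasDerivAt_sinh_const_mul (c τ : ℝ) :
    HasDerivAt (fun t => sinh (c * t)) (cosh (c * τ) * c) τ :=
  ((hasDerivAt_id' τ).const_mul c).sinh.congr_deriv (by rw [mul_one])

theorem hasDerivAt_cosh_const_mul (c τ : ℝ) :
    HasDerivAt (fun t => cosh (c * t)) (sinh (c * τ) * c) τ :=
  ((hasDerivAt_id' τ).const_mul c).cosh.congr_deriv (by rw [mul_one])

def mehlerA (b τ : ℝ) : ℝ := √(b / (2 * π)) * (√(sinh (2 * b * τ)))⁻¹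

def mehlerP (b τ : ℝ) : ℝ := b / 2 * (cosh (2 * b * τ) / sinh (2 * b * τ))

/-- This is `tanh (b * τ)`. -/
def mehlerT (b τ : ℝ) : ℝ := (cosh (2 * b * τ) - 1) / sinh (2 * b * τ)

section Mehler

variable {a b τ : ℝ}

theorem hasDerivAt_mehlerA (hs : 0 < sinh (2 * b * τ)) :
    HasDerivAt (mehlerA b) (-2 * mehlerP b τ * mehlerA b τ) τ := by
  have hr : √(sinh (2 * b * τ)) ≠ 0 := (sqrt_pos.mpr hs).ne'
  refine ((((hasDerivAt_sinh_const_mul (2 * b) τ).sqrt hs.ne').fun_inv hr).const_mul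
    √(b / (2 * π))).congr_deriv ?_
  simp only [mehlerA, mehlerP]
  have hsq := sq_sqrt hs.le
  generalize 2 * b * τ = θ at hs hr hsq ⊢
  field_simp
  rw [hsq]

theorem hasDerivAt_mehlerP (hs : sinh (2 * b * τ) ≠ 0) :
    HasDerivAt (mehlerP b) (b ^ 2 - 4 * mehlerP b τ ^ 2) τ := by
  refine (((hasDerivAt_cosh_const_mul (2 * b) τ).fun_div (hasDerivAt_sinh_const_mul (2 * b) τ)
    hs).const_mul (b / 2)).congr_deriv ?_
  simp only [mehlerP]
  generalize 2 * b * τ = θ at hs ⊢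
  field_simp
  ring

theorem hasDerivAt_mehlerT (hs : sinh (2 * b * τ) ≠ 0) :
    HasDerivAt (mehlerT b) (b * (1 - mehlerT b τ ^ 2)) τ := by
  refine (((hasDerivAt_cosh_const_mul (2 * b) τ).sub_const 1).fun_div
    (hasDerivAt_sinh_const_mul (2 * b) τ) hs).congr_deriv ?_
  simp only [mehlerT]
  have hcosh := cosh_sq (2 * b * τ)
  generalize 2 * b * τ = θ at hs hcosh ⊢
  field_simp
  linear_combination (-b) * hcosh

theorem four_mul_mehlerP_mul_mehlerT (hs : sinh (2 * b * τ) ≠ 0) :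
    4 * mehlerP b τ * mehlerT b τ = b * (1 + mehlerT b τ ^ 2) := by
  simp only [mehlerP, mehlerT]
  have hcosh := cosh_sq (2 * b * τ)
  generalize 2 * b * τ = θ at hs hcosh ⊢
  field_simp
  linear_combination 2 * b * hcosh

theorem mehler_kernel_eq_gaussian (hb : 0 < b) (hτ : 0 < τ) (y : ℝ) :
    1 / √(4 * π * τ) * √(2 * b * τ / sinh (2 * b * τ)) *
        exp (-(1 / (4 * τ)) *
          (2 * b * τ * cosh (2 * b * τ) / sinh (2 * b * τ) * y ^ 2
            + 4 * a * τ * ((cosh (2 * b * τ) - 1) / sinh (2 * b * τ)) * y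
            + 8 * a ^ 2 * τ ^ 2 * ((cosh (2 * b * τ) - 1) / (2 * b * τ * sinh (2 * b * τ))))) =
      gaussian (mehlerA b) (mehlerP b) (fun t => a * mehlerT b t)
        (fun t => a ^ 2 / b * mehlerT b t) τ y := by
  have hs : 0 < sinh (2 * b * τ) := sinh_pos_iff.mpr (by positivity)
  simp only [gaussian, mehlerA, mehlerP, mehlerT]
  congr 1
  · rw [one_div, ← sqrt_inv, ← sqrt_mul (by positivity), ← sqrt_inv,
      ← sqrt_mul (by positivity)]
    congr 1
    field_simp
    ring
  · congr 1
    field_simp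
    ring

end Mehler

end

theorem phi_heat_equation (a b : ℝ) (hb : 0 < b)
    (Φ : ℝ → ℝ → ℝ)
    (hΦ : ∀ τ y, Φ τ y =
      (1 / Real.sqrt (4 * π * τ)) * Real.sqrt ((2 * b * τ) / Real.sinh (2 * b * τ)) *
        Real.exp (-(1 / (4 * τ)) *
          (((2 * b * τ) * Real.cosh (2 * b * τ) / Real.sinh (2 * b * τ)) * y ^ 2
            + 4 * a * τ * ((Real.cosh (2 * b * τ) - 1) / Real.sinh (2 * b * τ)) * y
            + 8 * a ^ 2 * τ ^ 2 *
              ((Real.cosh (2 * b * τ) - 1) / ((2 * b * τ) * Real.sinh (2 * b * τ)))))) :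
    ∀ τ : ℝ, 0 < τ → ∀ y : ℝ,
      deriv (fun s => Φ s y) τ - deriv (fun z => deriv (fun w => Φ τ w) z) y
        + (a + b * y) ^ 2 * Φ τ y = 0 := by
  intro τ hτ y
  set G := gaussian (mehlerA b) (mehlerP b) (fun t => a * mehlerT b t)
    (fun t => a ^ 2 / b * mehlerT b t)
  have hΦG : ∀ σ, 0 < σ → Φ σ = G σ :=
    fun σ hσ => funext fun w => (hΦ σ w).trans (mehler_kernel_eq_gaussian hb hσ w)
  have htime : (fun s => Φ s y) =ᶠ[𝓝 τ] fun s => G s y :=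
    (eventually_gt_nhds hτ).mono fun σ hσ => congrFun (hΦG σ hσ) y
  have hs : 0 < sinh (2 * b * τ) := sinh_pos_iff.mpr (by positivity)
  rw [htime.deriv_eq, hΦG τ hτ]
  refine gaussian_heat_equation a b (hasDerivAt_mehlerA hs) (hasDerivAt_mehlerP hs.ne') ?_ ?_ y
  · exact ((hasDerivAt_mehlerT hs.ne').const_mul a).congr_deriv
      (by linear_combination a * four_mul_mehlerP_mul_mehlerT hs.ne')
  · exact ((hasDerivAt_mehlerT hs.ne').const_mul (a ^ 2 / b)).congr_deriv (by field_simp)
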